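/- Let δ be a derivation on a ring R, M an R-bimodule, d a δ-derivation on M, and ₗF_r a symmetric Gabriel filter. If d extends to a derivation on the symmetric module of quotients ₗM_r (i.e. to a δ-derivation d' on ₗM_r with d' q_M = q_M d), then such an extension is unique. -/

import Mathlib

open MulOpposite TensorProduct

/-- A derivation on a ring `S`: an additive map satisfying the Leibniz rule
`δ (a * b) = δ a * b + a * δ b`. -/
def IsDerivation {S : Type*} [Ring S] (δ : S → S) : Prop :=
  (∀ a b : S, δ (a + b) = δ a + δ b) ∧ (∀ a b : S, δ (a * b) = δ a * b + a * δ b)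

/-- A Gabriel filter of left ideals of a ring `S`.  Taking `S = Rᵐᵒᵖ`, this encodes a
Gabriel filter of right ideals of `R`. -/
structure GabrielFilter (S : Type*) [Ring S] where
  sets : Set (Ideal S)
  top_mem : ⊤ ∈ sets
  mono : ∀ ⦃I J : Ideal S⦄, I ∈ sets → I ≤ J → J ∈ sets
  inf_mem : ∀ ⦃I J : Ideal S⦄, I ∈ sets → J ∈ sets → I ⊓ J ∈ sets
  quot_mem : ∀ ⦃I : Ideal S⦄, I ∈ sets → ∀ s : S,
    Submodule.comap (LinearMap.toSpanSingleton S S s) I ∈ sets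
  trans : ∀ ⦃I J : Ideal S⦄, J ∈ sets →
    (∀ s ∈ J, Submodule.comap (LinearMap.toSpanSingleton S S s) I ∈ sets) → I ∈ sets

/-- The torsion set of a module for the torsion theory corresponding to a filter `𝔉` of
ideals: the elements whose annihilator belongs to `𝔉`. -/
def torsionSet {S : Type*} [Ring S] (𝔉 : Set (Ideal S)) (M : Type*) [AddCommGroup M]
    [Module S M] : Set M :=
  {x : M | LinearMap.ker (LinearMap.toSpanSingleton S M x) ∈ 𝔉}

/-- The enveloping ring `R ⊗_ℤ Rᵐᵒᵖ`; an `R`-bimodule is the same thing as a right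
`R ⊗_ℤ Rᵐᵒᵖ`-module, i.e. a left `(R ⊗_ℤ Rᵐᵒᵖ)ᵐᵒᵖ`-module, via `x • (r ⊗ s) = s x r`. -/
abbrev Env (R : Type*) [Ring R] := R ⊗[ℤ] Rᵐᵒᵖ

/-- The left annihilator of an element of an `R`-bimodule, a left ideal of `R`:
`ann_l(x) = {s : R | s • x = 0}`, where the left action of `s` is the action of
`1 ⊗ op s`. -/
def lAnn {R : Type*} [Ring R] (M : Type*) [AddCommGroup M] [Module (Env R)ᵐᵒᵖ M]
    (x : M) : Ideal R where
  carrier := {s : R | op ((1 : R) ⊗ₜ[ℤ] op s) • x = 0}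
  zero_mem' := by simp <;> exact zero_smul (Env R)ᵐᵒᵖ x
  add_mem' := by
    intro a b ha hb
    simp only [Set.mem_setOf_eq] at *
    rw [show ((1 : R) ⊗ₜ[ℤ] op (a + b)) = (1 : R) ⊗ₜ[ℤ] op a + (1 : R) ⊗ₜ[ℤ] op b by
        rw [op_add, TensorProduct.tmul_add],
      op_add, add_smul, ha, hb, add_zero]
  smul_mem' := by
    intro c s hs
    simp only [Set.mem_setOf_eq, smul_eq_mul] at *
    rw [show ((1 : R) ⊗ₜ[ℤ] op (c * s)) = ((1 : R) ⊗ₜ[ℤ] op s) * ((1 : R) ⊗ₜ[ℤ] op c) by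
        rw [Algebra.TensorProduct.tmul_mul_tmul, one_mul, ← op_mul],
      op_mul, mul_smul, hs, smul_zero]

/-- The right annihilator of an element of an `R`-bimodule, a right ideal of `R`
(encoded as a left ideal of `Rᵐᵒᵖ`): `ann_r(x) = {r | x • r = 0}`, where the right
action of `r` is the action of `r ⊗ 1`. -/
def rAnn {R : Type*} [Ring R] (M : Type*) [AddCommGroup M] [Module (Env R)ᵐᵒᵖ M]
    (x : M) : Ideal Rᵐᵒᵖ where
  carrier := {j : Rᵐᵒᵖ | op (unop j ⊗ₜ[ℤ] (1 : Rᵐᵒᵖ)) • x = 0}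
  zero_mem' := by simp <;> exact zero_smul (Env R)ᵐᵒᵖ x
  add_mem' := by
    intro a b ha hb
    simp only [Set.mem_setOf_eq] at *
    rw [show (unop (a + b) ⊗ₜ[ℤ] (1 : Rᵐᵒᵖ)) =
          unop a ⊗ₜ[ℤ] (1 : Rᵐᵒᵖ) + unop b ⊗ₜ[ℤ] (1 : Rᵐᵒᵖ) by
        rw [unop_add, TensorProduct.add_tmul],
      op_add, add_smul, ha, hb, add_zero]
  smul_mem' := by
    intro c j hj
    simp only [Set.mem_setOf_eq, smul_eq_mul] at *
    rw [show (unop (c * j) ⊗ₜ[ℤ] (1 : Rᵐᵒᵖ)) =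
          (unop j ⊗ₜ[ℤ] (1 : Rᵐᵒᵖ)) * (unop c ⊗ₜ[ℤ] (1 : Rᵐᵒᵖ)) by
        rw [Algebra.TensorProduct.tmul_mul_tmul, one_mul, unop_mul],
      op_mul, mul_smul, hj, smul_zero]

/-- The symmetric annihilator of an element of a bimodule: the right ideal
`{t ∈ R ⊗_ℤ Rᵐᵒᵖ | x t = 0}`. -/
def symAnn {R : Type*} [Ring R] (M : Type*) [AddCommGroup M] [Module (Env R)ᵐᵒᵖ M]
    (x : M) : Ideal (Env R)ᵐᵒᵖ :=
  LinearMap.ker (LinearMap.toSpanSingleton (Env R)ᵐᵒᵖ M x)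

/-- The right ideal `J ⊗ Rᵐᵒᵖ + R ⊗ I` of `R ⊗_ℤ Rᵐᵒᵖ` generated by a left ideal `I`
and a right ideal `J` of `R`. -/
def symGen {R : Type*} [Ring R] (I : Ideal R) (J : Ideal Rᵐᵒᵖ) : Ideal (Env R)ᵐᵒᵖ :=
  Ideal.span ((fun j : Rᵐᵒᵖ => op (unop j ⊗ₜ[ℤ] (1 : Rᵐᵒᵖ))) '' (J : Set Rᵐᵒᵖ) ∪
    (fun i : R => op ((1 : R) ⊗ₜ[ℤ] op i)) '' (I : Set R))

/-- The symmetric Gabriel filter induced by a left Gabriel filter `Fl` and a right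
Gabriel filter `Fr`: the right ideals of `R ⊗_ℤ Rᵐᵒᵖ` containing `J ⊗ Rᵐᵒᵖ + R ⊗ I` for
some `I ∈ Fl` and `J ∈ Fr`. -/
def symSets {R : Type*} [Ring R] (Fl : GabrielFilter R) (Fr : GabrielFilter Rᵐᵒᵖ) :
    Set (Ideal (Env R)ᵐᵒᵖ) :=
  {K | ∃ I ∈ Fl.sets, ∃ J ∈ Fr.sets, symGen I J ≤ K}

/-- The torsion submodule of a bimodule for the symmetric torsion theory induced by `Fl`
and `Fr`: `ₗt_r(M) = t_l(M) ∩ t_r(M)`. -/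
def symTorsion {R : Type*} [Ring R] (Fl : GabrielFilter R) (Fr : GabrielFilter Rᵐᵒᵖ)
    (M : Type*) [AddCommGroup M] [Module (Env R)ᵐᵒᵖ M] : Set M :=
  {x : M | lAnn M x ∈ Fl.sets} ∩ {x : M | rAnn M x ∈ Fr.sets}

/-- `δ'` is the derivation induced on `R ⊗_ℤ Rᵐᵒᵖ` by the derivation `δ` on `R`:
`δ̄(r ⊗ s) = δ r ⊗ s + r ⊗ δ s`. -/
def IsInducedDerivation {R : Type*} [Ring R] (δ : R → R) (δ' : Env R → Env R) : Prop :=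
  (∀ a b : Env R, δ' (a + b) = δ' a + δ' b) ∧
    ∀ r s : R, δ' (r ⊗ₜ[ℤ] op s) = δ r ⊗ₜ[ℤ] op s + r ⊗ₜ[ℤ] op (δ s)

/-- `d` is a `δ`-derivation on the `R`-bimodule `M`: `d` is additive,
`d (x r) = (d x) r + x (δ r)` and `d (s x) = (δ s) x + s (d x)`. -/
def IsBimodDerivation {R : Type*} [Ring R] (δ : R → R) {M : Type*} [AddCommGroup M]
    [Module (Env R)ᵐᵒᵖ M] (d : M → M) : Prop :=
  (∀ x y : M, d (x + y) = d x + d y) ∧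
  (∀ (x : M) (r : R),
    d (op (r ⊗ₜ[ℤ] (1 : Rᵐᵒᵖ)) • x) =
      op (r ⊗ₜ[ℤ] (1 : Rᵐᵒᵖ)) • d x + op (δ r ⊗ₜ[ℤ] (1 : Rᵐᵒᵖ)) • x) ∧
  (∀ (x : M) (s : R),
    d (op ((1 : R) ⊗ₜ[ℤ] op s) • x) =
      op ((1 : R) ⊗ₜ[ℤ] op (δ s)) • x + op ((1 : R) ⊗ₜ[ℤ] op s) • d x)

/-- The symmetric filter induced by `Fl` and `Fr` is differential: for every `I` in the
filter there is `K` in the filter with `δ̄(K) ⊆ I` for all derivations `δ` on `R`. -/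
def IsSymDifferential {R : Type*} [Ring R] (Fl : GabrielFilter R)
    (Fr : GabrielFilter Rᵐᵒᵖ) : Prop :=
  ∀ I ∈ symSets Fl Fr, ∃ K ∈ symSets Fl Fr, ∀ δ : R → R, IsDerivation δ →
    ∀ δ' : Env R → Env R, IsInducedDerivation δ δ' →
      ∀ t : (Env R)ᵐᵒᵖ, t ∈ K → op (δ' (unop t)) ∈ I

/-- `q : M → Q` realizes `Q` as the symmetric module of quotients of the bimodule `M`
with respect to the symmetric filter induced by `Fl` and `Fr`: the kernel of `q` is
`ₗt_r(M)`, `Q` is torsion free, the cokernel of `q` is torsion, and `Q` is closed. -/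
structure IsSymModuleOfQuotients {R : Type*} [Ring R] (Fl : GabrielFilter R)
    (Fr : GabrielFilter Rᵐᵒᵖ) {M Q : Type*} [AddCommGroup M] [Module (Env R)ᵐᵒᵖ M]
    [AddCommGroup Q] [Module (Env R)ᵐᵒᵖ Q] (q : M →ₗ[(Env R)ᵐᵒᵖ] Q) : Prop where
  ker_eq : (LinearMap.ker q : Set M) = symTorsion Fl Fr M
  torsionFree : symTorsion Fl Fr Q = {0}
  coker_torsion : ∀ y : Q,
    Submodule.comap (LinearMap.toSpanSingleton (Env R)ᵐᵒᵖ Q y) (LinearMap.range q) ∈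
      symSets Fl Fr
  closed : ∀ K ∈ symSets Fl Fr, ∀ f : ↥K →ₗ[(Env R)ᵐᵒᵖ] Q,
    ∃ g : (Env R)ᵐᵒᵖ →ₗ[(Env R)ᵐᵒᵖ] Q, ∀ t : ↥K, g ↑t = f t

/- Two `δ`-derivations extending `d` differ by a map that commutes with the left and right
actions of `R` and vanishes on `q(M)`. Since `Q / q(M)` is torsion, every `y : Q` has
`I y ⊆ q(M)` and `y J ⊆ q(M)` for some `I ∈ Fl`, `J ∈ Fr`, so the
difference at `y` is annihilated by `I` and `J`; it is torsion in the torsion-free `Q`, hence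
zero. -/

section SymGen

variable {R : Type*} [Ring R] {I : Ideal R} {J : Ideal Rᵐᵒᵖ} {K : Ideal (Env R)ᵐᵒᵖ}

lemma left_mem_of_symGen_le (h : symGen I J ≤ K) {s : R} (hs : s ∈ I) :
    op ((1 : R) ⊗ₜ[ℤ] op s) ∈ K :=
  h (Ideal.subset_span (Or.inr ⟨s, hs, rfl⟩))

lemma right_mem_of_symGen_le (h : symGen I J ≤ K) {j : Rᵐᵒᵖ} (hj : j ∈ J) :
    op (unop j ⊗ₜ[ℤ] (1 : Rᵐᵒᵖ)) ∈ K :=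
  h (Ideal.subset_span (Or.inl ⟨j, hj, rfl⟩))

end SymGen

namespace IsBimodDerivation

variable {R : Type*} [Ring R] {δ : R → R} {Q : Type*} [AddCommGroup Q]
  [Module (Env R)ᵐᵒᵖ Q] {d₁ d₂ : Q → Q}

lemma sub_apply_smul_left (h₁ : IsBimodDerivation δ d₁) (h₂ : IsBimodDerivation δ d₂)
    (s : R) (y : Q) :
    d₁ (op ((1 : R) ⊗ₜ[ℤ] op s) • y) - d₂ (op ((1 : R) ⊗ₜ[ℤ] op s) • y) =
      op ((1 : R) ⊗ₜ[ℤ] op s) • (d₁ y - d₂ y) := by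
  rw [h₁.2.2, h₂.2.2, smul_sub]
  abel

lemma sub_apply_smul_right (h₁ : IsBimodDerivation δ d₁) (h₂ : IsBimodDerivation δ d₂)
    (r : R) (y : Q) :
    d₁ (op (r ⊗ₜ[ℤ] (1 : Rᵐᵒᵖ)) • y) - d₂ (op (r ⊗ₜ[ℤ] (1 : Rᵐᵒᵖ)) • y) =
      op (r ⊗ₜ[ℤ] (1 : Rᵐᵒᵖ)) • (d₁ y - d₂ y) := by
  rw [h₁.2.1, h₂.2.1, smul_sub]
  abel

variable {Fl : GabrielFilter R} {Fr : GabrielFilter Rᵐᵒᵖ}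

lemma sub_mem_symTorsion_of_eqOn (h₁ : IsBimodDerivation δ d₁)
    (h₂ : IsBimodDerivation δ d₂) {N : Submodule (Env R)ᵐᵒᵖ Q} (heq : Set.EqOn d₁ d₂ N)
    {y : Q} (hy : N.comap (LinearMap.toSpanSingleton (Env R)ᵐᵒᵖ Q y) ∈ symSets Fl Fr) :
    d₁ y - d₂ y ∈ symTorsion Fl Fr Q := by
  obtain ⟨I, hI, J, hJ, hle⟩ := hy
  refine ⟨Fl.mono hI fun s hs => ?_, Fr.mono hJ fun j hj => ?_⟩
  · change _ • _ = (0 : Q)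
    rw [← h₁.sub_apply_smul_left h₂, sub_eq_zero]
    exact heq (left_mem_of_symGen_le hle hs)
  · change _ • _ = (0 : Q)
    rw [← h₁.sub_apply_smul_right h₂, sub_eq_zero]
    exact heq (right_mem_of_symGen_le hle hj)

end IsBimodDerivation

theorem sym_extension_unique_general {R : Type*} [Ring R]
    (δ : R → R)
    (Fl : GabrielFilter R) (Fr : GabrielFilter Rᵐᵒᵖ)
    {M Q : Type*} [AddCommGroup M] [Module (Env R)ᵐᵒᵖ M]
    [AddCommGroup Q] [Module (Env R)ᵐᵒᵖ Q]
    (d : M → M)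
    (q : M →ₗ[(Env R)ᵐᵒᵖ] Q) (hq : IsSymModuleOfQuotients Fl Fr q)
    (d₁ d₂ : Q → Q)
    (hd₁ : IsBimodDerivation δ d₁) (hd₂ : IsBimodDerivation δ d₂)
    (hext₁ : ∀ x : M, d₁ (q x) = q (d x)) (hext₂ : ∀ x : M, d₂ (q x) = q (d x)) :
    d₁ = d₂ := by
  have heq : Set.EqOn d₁ d₂ (LinearMap.range q) := by
    rintro _ ⟨x, rfl⟩
    rw [hext₁, hext₂]
  funext y
  have htors := hd₁.sub_mem_symTorsion_of_eqOn hd₂ heq (hq.coker_torsion y)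
  rw [hq.torsionFree] at htors
  exact sub_eq_zero.mp htors

/-- Let `δ` be a derivation on `R`, `M` an `R`-bimodule, `d` a
`δ`-derivation on `M` and `ₗF_r` a symmetric Gabriel filter (induced by `Fl` and `Fr`).
If `d` extends to a derivation on the symmetric module of quotients `ₗM_r` (i.e. to a
`δ`-derivation `d'` on `ₗM_r` with `d' ∘ q_M = q_M ∘ d`), then such an extension is
unique. -/
theorem sym_extension_unique {R : Type*} [Ring R]
    (δ : R → R) (hδ : IsDerivation δ)
    (Fl : GabrielFilter R) (Fr : GabrielFilter Rᵐᵒᵖ)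
    {M Q : Type*} [AddCommGroup M] [Module (Env R)ᵐᵒᵖ M]
    [AddCommGroup Q] [Module (Env R)ᵐᵒᵖ Q]
    (d : M → M) (hd : IsBimodDerivation δ d)
    (q : M →ₗ[(Env R)ᵐᵒᵖ] Q) (hq : IsSymModuleOfQuotients Fl Fr q)
    (d₁ d₂ : Q → Q)
    (hd₁ : IsBimodDerivation δ d₁) (hd₂ : IsBimodDerivation δ d₂)
    (hext₁ : ∀ x : M, d₁ (q x) = q (d x)) (hext₂ : ∀ x : M, d₂ (q x) = q (d x)) :
    d₁ = d₂ :=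
  sym_extension_unique_general δ Fl Fr d q hq d₁ d₂ hd₁ hd₂ hext₁ hext₂
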